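/- arXiv:1807.00891 — 2 statements merged into one kernel-verified Lean document; each statement's English description precedes it below -/
import Mathlib

section
/- Let P and Q be probability measures on a common measurable space with Q absolutely continuous with respect to P and with ∫ (dQ/dP)² dP finite. For any measurable event A (the region where the test selects Q), set α = P(A) and β = Q(Aᶜ), and suppose 0 < α < 1. Then (1−β)²/α + β²/(1−α) ≤ ∫ (dQ/dP)² dP. Furthermore this bound is tight: for any α, β ∈ (0,1) there exist probability measures P, Q and an event A for which equality holds (e.g. P = Bernoulli(α), Q = Bernoulli(1−β), A = {1}). -/
open MeasureTheory ProbabilityTheory Filter Topology ENNReal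

noncomputable section

/-- Contiguity of a sequence of measures: `Q ◁ P`. -/
def Contiguous {Ω : ℕ → Type} [∀ n, MeasurableSpace (Ω n)]
    (Q P : ∀ n, Measure (Ω n)) : Prop :=
  ∀ A : ∀ n, Set (Ω n), (∀ n, MeasurableSet (A n)) →
    Tendsto (fun n => P n (A n)) atTop (𝓝 0) →
    Tendsto (fun n => Q n (A n)) atTop (𝓝 0)

/-- A spike prior: a family of probability measures on ℝⁿ with ‖x‖ → 1 in probability. -/
structure SpikePrior where
  μ : ∀ n : ℕ, Measure (EuclideanSpace ℝ (Fin n))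
  isProb : ∀ n, IsProbabilityMeasure (μ n)
  norm_tendsto_one : ∀ ε : ℝ, 0 < ε →
    Tendsto (fun n => μ n {x | ε < |‖x‖ - 1|}) atTop (𝓝 0)

/-- The second moment `E_{x,x'} exp((n λ²/2) ⟨x,x'⟩²)` (valued in `[0,∞]`). -/
def wignerSecondMoment (μ : ∀ n : ℕ, Measure (EuclideanSpace ℝ (Fin n)))
    (lam : ℝ) (n : ℕ) : ℝ≥0∞ :=
  ∫⁻ p, ENNReal.ofReal (Real.exp ((n * lam ^ 2 / 2) * (inner ℝ p.1 p.2 : ℝ) ^ 2))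
    ∂((μ n).prod (μ n))

/-- Wigner noise matrix: symmetric, entries independent up to symmetry, off-diagonal `P`,
diagonal `Pd`. -/
def wignerNoise (P Pd : Measure ℝ) (n : ℕ) : Measure (Fin n → Fin n → ℝ) :=
  (Measure.pi fun p : Fin n × Fin n => if p.1 = p.2 then Pd else P).map
    (fun g i j => if i ≤ j then g (i, j) else g (j, i))

/-- The general spiked Wigner model `Wig(λ, P, Pd, μ)`: law of `λ x xᵀ + n^{-1/2} W`. -/
def spikedWigner (lam : ℝ) (P Pd : Measure ℝ) {n : ℕ}
    (μ : Measure (EuclideanSpace ℝ (Fin n))) : Measure (Fin n → Fin n → ℝ) :=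
  (μ.prod (wignerNoise P Pd n)).map
    (fun q i j => lam * (q.1 i * q.1 j) + (Real.sqrt n)⁻¹ * q.2 i j)

/-- The unspiked Wigner model `Wig(0, P, Pd)`: law of `n^{-1/2} W`. -/
def unspikedWigner (P Pd : Measure ℝ) (n : ℕ) : Measure (Fin n → Fin n → ℝ) :=
  (wignerNoise P Pd n).map (fun W i j => (Real.sqrt n)⁻¹ * W i j)

/-- Spiked Gaussian Wigner model `GWig(λ, μ)` (GOE noise). -/
def GWig (lam : ℝ) {n : ℕ} (μ : Measure (EuclideanSpace ℝ (Fin n))) :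
    Measure (Fin n → Fin n → ℝ) :=
  spikedWigner lam (gaussianReal 0 1) (gaussianReal 0 2) μ

/-- Unspiked Gaussian Wigner model `GWig(0)`. -/
def GWig0 (n : ℕ) : Measure (Fin n → Fin n → ℝ) :=
  unspikedWigner (gaussianReal 0 1) (gaussianReal 0 2) n

/-- A real random variable `Z` on `(Ω, μ)` is `s2`-subgaussian. -/
def IsSubgaussian {Ω : Type} [MeasurableSpace Ω] (μ : Measure Ω) (Z : Ω → ℝ) (s2 : ℝ) : Prop :=
  Integrable Z μ ∧ (∫ ω, Z ω ∂μ) = 0 ∧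
    ∀ v : ℝ, ∫⁻ ω, ENNReal.ofReal (Real.exp (v * Z ω)) ∂μ
      ≤ ENNReal.ofReal (Real.exp (s2 * v ^ 2 / 2))

/-- An ℝⁿ-valued random variable (given by its law `μ`) is `s2`-subgaussian. -/
def IsSubgaussianVec {n : ℕ} (μ : Measure (EuclideanSpace ℝ (Fin n))) (s2 : ℝ) : Prop :=
  Integrable id μ ∧ (∫ x, x ∂μ) = 0 ∧
    ∀ v : EuclideanSpace ℝ (Fin n),
      ∫⁻ x, ENNReal.ofReal (Real.exp ((inner ℝ v x : ℝ))) ∂μ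
        ≤ ENNReal.ofReal (Real.exp (s2 * ‖v‖ ^ 2 / 2))

/-- `λ*_X`: the supremum of λ ≥ 0 for which the Wigner second moment stays bounded. -/
def lamStar (μ : ∀ n : ℕ, Measure (EuclideanSpace ℝ (Fin n))) : ℝ :=
  sSup {lam : ℝ | 0 ≤ lam ∧
    ∃ B : ℝ≥0∞, B ≠ ⊤ ∧ ∀ n, wignerSecondMoment μ lam n ≤ B}

/-- Standard Gaussian on `EuclideanSpace ℝ (Fin n)`. -/
def stdGaussianE (n : ℕ) : Measure (EuclideanSpace ℝ (Fin n)) :=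
  (Measure.pi fun _ : Fin n => gaussianReal 0 1).map
    (fun y => (WithLp.equiv 2 (Fin n → ℝ)).symm y)

/-- The square root of a positive semidefinite matrix (Mathlib's former
`Matrix.PosSemidef.sqrt`, removed since). -/
def Matrix.PosSemidef.sqrt {n : Type*} [Fintype n] [DecidableEq n] {A : Matrix n n ℝ}
    (hA : A.PosSemidef) : Matrix n n ℝ :=
  (hA.1.eigenvectorUnitary : Matrix n n ℝ) * Matrix.diagonal ((↑) ∘ (√·) ∘ hA.1.eigenvalues)
    * (star hA.1.eigenvectorUnitary : Matrix n n ℝ)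

open scoped Classical in
/-- Centered multivariate Gaussian `N(0, S)` (zero measure when `S` is not psd). -/
def gaussianCov {n : ℕ} (S : Matrix (Fin n) (Fin n) ℝ) : Measure (EuclideanSpace ℝ (Fin n)) :=
  if h : S.PosSemidef then
    (stdGaussianE n).map
      (fun w => (WithLp.equiv 2 (Fin n → ℝ)).symm (h.sqrt.mulVec (fun i => w i)))
  else 0

/-- The spiked Wishart model: the joint law of `N` i.i.d. samples from `N(0, I + β x xᵀ)`
with `x ~ μ`. -/
def wishartSpiked (β : ℝ) {n : ℕ} (μ : Measure (EuclideanSpace ℝ (Fin n))) (N : ℕ) :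
    Measure (Fin N → EuclideanSpace ℝ (Fin n)) :=
  μ.bind (fun x => Measure.pi fun _ : Fin N =>
    gaussianCov (1 + β • Matrix.vecMulVec (fun i => x i) (fun i => x i)))

/-- The unspiked Wishart model: `N` i.i.d. samples from `N(0, I)`. -/
def wishartNull (n N : ℕ) : Measure (Fin N → EuclideanSpace ℝ (Fin n)) :=
  Measure.pi fun _ : Fin N => stdGaussianE n

/-- The i.i.d. spike prior `iid(π/√n)`. -/
def iidPrior (π : Measure ℝ) (n : ℕ) : Measure (EuclideanSpace ℝ (Fin n)) :=
  (Measure.pi fun _ : Fin n => π).map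
    (fun y => (WithLp.equiv 2 (Fin n → ℝ)).symm (fun i => y i / Real.sqrt n))

/-- `f` is a rate function for the prior `μ`. -/
def IsRateFunction (μ : ∀ n : ℕ, Measure (EuclideanSpace ℝ (Fin n))) (f : ℝ → ℝ) : Prop :=
  (∀ t ∈ Set.Ico (0:ℝ) 1, 0 ≤ f t) ∧
  ∃ b : ℕ → ℝ → ℝ,
    (∀ n : ℕ, ∀ t ∈ Set.Ico (0:ℝ) 1,
      b n t ≤ -(1 / (n:ℝ)) *
        Real.log ((((μ n).prod (μ n)) {p | t ≤ |(inner ℝ p.1 p.2 : ℝ)|}).toReal)) ∧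
    TendstoUniformlyOn b f atTop (Set.Ico 0 1)

/-- The rate function `f` admits a local Chernoff bound for the prior `μ`. -/
def HasLocalChernoff (μ : ∀ n : ℕ, Measure (EuclideanSpace ℝ (Fin n))) (f : ℝ → ℝ) : Prop :=
  ∃ T : ℝ, 0 < T ∧ ∃ C : ℝ, 0 < C ∧ ∀ n : ℕ, ∀ t ∈ Set.Icc (0:ℝ) T,
    ((μ n).prod (μ n)) {p | t ≤ |(inner ℝ p.1 p.2 : ℝ)|}
      ≤ ENNReal.ofReal (C * Real.exp (-(n:ℝ) * f t))

/-- The function `F(β,t)` appearing in the Wishart lower bound (Theorem 5.9). -/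
def wishartF (β t : ℝ) : ℝ :=
  (1 + β) * (t * ((Real.sqrt (((1 - t ^ 2) / (2 * t * (β + 1))) ^ 2 + 1)
      - (1 - t ^ 2) / (2 * t * (β + 1))) - t) / (1 - t ^ 2))
    + (1 / 2) * Real.log ((1 - (Real.sqrt (((1 - t ^ 2) / (2 * t * (β + 1))) ^ 2 + 1)
      - (1 - t ^ 2) / (2 * t * (β + 1))) ^ 2) / (1 - t ^ 2))

/-!
Write `f = dQ/dP`. On each cell `S` of the partition `{A, Aᶜ}`, Cauchy–Schwarz gives
`Q(S)² = (∫_S f dP)² ≤ P(S) ∫_S f² dP`; dividing by `P(S)` and adding the two cells yields the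
bound, because `Q(A) = 1 - β` and `P(Aᶜ) = 1 - α`. Equality in Cauchy–Schwarz holds when `f` is
constant on each cell, which is automatic on the two-point space `Bool`.
-/

section ChiSquare

open Measure

variable {α : Type*} [MeasurableSpace α] {μ ν : Measure α}

lemma sq_lintegral_le_measure_univ_mul_lintegral_sq {f : α → ℝ≥0∞} (hf : AEMeasurable f μ) :
    (∫⁻ x, f x ∂μ) ^ 2 ≤ μ Set.univ * ∫⁻ x, f x ^ 2 ∂μ := by
  have h := ENNReal.lintegral_mul_le_Lp_mul_Lq μ Real.HolderConjugate.two_two hf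
    (aemeasurable_const (b := (1 : ℝ≥0∞)))
  simp only [Pi.mul_apply, mul_one, ENNReal.one_rpow, lintegral_const, one_mul] at h
  calc (∫⁻ x, f x ∂μ) ^ 2
      ≤ ((∫⁻ x, f x ^ (2 : ℝ) ∂μ) ^ (1 / 2 : ℝ) * μ Set.univ ^ (1 / 2 : ℝ)) ^ 2 :=
        pow_le_pow_left' h 2
    _ = μ Set.univ * ∫⁻ x, f x ^ 2 ∂μ := by
        rw [mul_pow, ← ENNReal.rpow_natCast (_ ^ (1 / 2 : ℝ)),
          ← ENNReal.rpow_natCast (_ ^ (1 / 2 : ℝ)), ← ENNReal.rpow_mul, ← ENNReal.rpow_mul]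
        norm_num [mul_comm]

lemma sq_measure_le_measure_mul_setLIntegral_rnDeriv_sq [μ.HaveLebesgueDecomposition ν]
    [SFinite ν] (hμν : μ ≪ ν) (s : Set α) :
    μ s ^ 2 ≤ ν s * ∫⁻ x in s, μ.rnDeriv ν x ^ 2 ∂ν := by
  rw [← setLIntegral_rnDeriv hμν s, ← restrict_apply_univ]
  exact sq_lintegral_le_measure_univ_mul_lintegral_sq (measurable_rnDeriv μ ν).aemeasurable

lemma measureReal_sq_div_le_toReal_setLIntegral_rnDeriv_sq [μ.HaveLebesgueDecomposition ν]
    [IsFiniteMeasure ν] (hμν : μ ≪ ν) {s : Set α}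
    (hs : ∫⁻ x in s, μ.rnDeriv ν x ^ 2 ∂ν ≠ ⊤) :
    μ.real s ^ 2 / ν.real s ≤ (∫⁻ x in s, μ.rnDeriv ν x ^ 2 ∂ν).toReal := by
  -- if `ν s = 0` the left side is `0` by the convention `x / 0 = 0`
  refine div_le_of_le_mul₀ measureReal_nonneg ENNReal.toReal_nonneg ?_
  rw [mul_comm, measureReal_def, measureReal_def, ← ENNReal.toReal_pow, ← ENNReal.toReal_mul]
  exact ENNReal.toReal_mono (by finiteness)
    (sq_measure_le_measure_mul_setLIntegral_rnDeriv_sq hμν s)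

lemma measureReal_sq_div_add_compl_le_toReal_lintegral_rnDeriv_sq
    [μ.HaveLebesgueDecomposition ν] [IsFiniteMeasure ν] (hμν : μ ≪ ν)
    (hfin : ∫⁻ x, μ.rnDeriv ν x ^ 2 ∂ν ≠ ⊤)
    {s : Set α} (hs : MeasurableSet s) :
    μ.real s ^ 2 / ν.real s + μ.real sᶜ ^ 2 / ν.real sᶜ
      ≤ (∫⁻ x, μ.rnDeriv ν x ^ 2 ∂ν).toReal := by
  have hfin_on (t : Set α) : ∫⁻ x in t, μ.rnDeriv ν x ^ 2 ∂ν ≠ ⊤ :=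
    ne_top_of_le_ne_top hfin (setLIntegral_le_lintegral _ _)
  rw [← lintegral_add_compl _ hs, ENNReal.toReal_add (hfin_on s) (hfin_on sᶜ)]
  exact add_le_add (measureReal_sq_div_le_toReal_setLIntegral_rnDeriv_sq hμν (hfin_on s))
    (measureReal_sq_div_le_toReal_setLIntegral_rnDeriv_sq hμν (hfin_on sᶜ))

variable [MeasurableSingletonClass α]

lemma rnDeriv_mul_measure_singleton [μ.HaveLebesgueDecomposition ν] [SFinite ν] (hμν : μ ≪ ν)
    (x : α) : μ.rnDeriv ν x * ν {x} = μ {x} := by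
  rw [← lintegral_singleton, setLIntegral_rnDeriv hμν]

lemma lintegral_rnDeriv_sq_eq_sum_singleton [Fintype α] [μ.HaveLebesgueDecomposition ν]
    [IsFiniteMeasure ν] (hμν : μ ≪ ν) :
    ∫⁻ x, μ.rnDeriv ν x ^ 2 ∂ν = ∑ x, μ {x} ^ 2 / ν {x} := by
  rw [lintegral_fintype]
  refine Finset.sum_congr rfl fun x _ => ?_
  rw [← rnDeriv_mul_measure_singleton hμν x]
  rcases eq_or_ne (ν {x}) 0 with h | h
  · simp [h]
  · rw [mul_pow, pow_two (ν {x}), ← mul_assoc, ENNReal.mul_div_cancel_right h (measure_ne_top _ _)]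

lemma toReal_lintegral_rnDeriv_sq_eq_sum_singleton [Fintype α] [IsFiniteMeasure μ]
    [μ.HaveLebesgueDecomposition ν] [IsFiniteMeasure ν] (hμν : μ ≪ ν) :
    (∫⁻ x, μ.rnDeriv ν x ^ 2 ∂ν).toReal = ∑ x, μ.real {x} ^ 2 / ν.real {x} := by
  have hterm (x : α) : μ {x} ^ 2 / ν {x} ≠ ⊤ := by
    rcases eq_or_ne (ν {x}) 0 with h | h
    · simp [h, hμν h]
    · exact ENNReal.div_ne_top (by finiteness) h
  rw [lintegral_rnDeriv_sq_eq_sum_singleton hμν, ENNReal.toReal_sum fun x _ => hterm x]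
  simp only [ENNReal.toReal_div, ENNReal.toReal_pow, measureReal_def]

end ChiSquare

section Bernoulli

open unitInterval

variable {X : Type*} [MeasurableSpace X] {p : I}

lemma bernoulliMeasure_absolutelyContinuous (hp₀ : 0 < (p : ℝ)) (hp₁ : (p : ℝ) < 1) (x y : X)
    (q : I) : Ber(x, y, q) ≪ Ber(x, y, p) := by
  classical
  refine Measure.AbsolutelyContinuous.mk fun s hs h => ?_
  have hp : toNNReal p ≠ 0 := (NNReal.coe_pos.1 (by simpa using hp₀)).ne'
  have hσp : toNNReal (σ p) ≠ 0 := (NNReal.coe_pos.1 (by simpa using hp₁)).ne'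
  rw [bernoulliMeasure_apply p hs] at h
  rw [bernoulliMeasure_apply q hs]
  split_ifs at h ⊢ <;> simp_all

lemma toReal_lintegral_rnDeriv_sq_bernoulliMeasure (hp₀ : 0 < (p : ℝ)) (hp₁ : (p : ℝ) < 1)
    (q : I) :
    (∫⁻ x, Ber(true, false, q).rnDeriv Ber(true, false, p) x ^ 2 ∂Ber(true, false, p)).toReal
      = q ^ 2 / p + (1 - q) ^ 2 / (1 - p) := by
  rw [toReal_lintegral_rnDeriv_sq_eq_sum_singleton
    (bernoulliMeasure_absolutelyContinuous hp₀ hp₁ true false q), Fintype.sum_bool]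
  simp

end Bernoulli

/-- **Proposition 2.5.** For any test with acceptance region `A` for the alternative `Q`,
with type I error `α = P(A)` and type II error `β = Q(Aᶜ)`,
`(1-β)²/α + β²/(1-α) ≤ ∫ (dQ/dP)² dP`; and the bound is tight: for any `α, β ∈ (0,1)`
there exist probability measures `P`, `Q` (e.g. on `Bool`) and an event `A` achieving equality. -/
theorem hypothesis_testing_power_bound :
    (∀ (Ω : Type) [MeasurableSpace Ω] (P Q : Measure Ω),
      IsProbabilityMeasure P → IsProbabilityMeasure Q → Q ≪ P →
      (∫⁻ ω, (Q.rnDeriv P ω) ^ 2 ∂P) ≠ ⊤ →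
      ∀ A : Set Ω, MeasurableSet A →
        0 < (P A).toReal → (P A).toReal < 1 →
        (1 - (Q Aᶜ).toReal) ^ 2 / (P A).toReal
            + (Q Aᶜ).toReal ^ 2 / (1 - (P A).toReal)
          ≤ (∫⁻ ω, (Q.rnDeriv P ω) ^ 2 ∂P).toReal) ∧
    (∀ a b : ℝ, a ∈ Set.Ioo (0:ℝ) 1 → b ∈ Set.Ioo (0:ℝ) 1 →
      ∃ (P Q : Measure Bool), IsProbabilityMeasure P ∧ IsProbabilityMeasure Q ∧ Q ≪ P ∧
        ∃ A : Set Bool, MeasurableSet A ∧ (P A).toReal = a ∧ (Q Aᶜ).toReal = b ∧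
          (1 - b) ^ 2 / a + b ^ 2 / (1 - a)
            = (∫⁻ ω, (Q.rnDeriv P ω) ^ 2 ∂P).toReal) := by
  refine ⟨fun Ω _ P Q _ _ hQP hfin A hA _ _ => ?_, fun a b ha hb => ?_⟩
  · have h := measureReal_sq_div_add_compl_le_toReal_lintegral_rnDeriv_sq hQP hfin hA
    rwa [probReal_compl_eq_one_sub hA (μ := P), ← sub_sub_cancel 1 (Q.real A),
      ← probReal_compl_eq_one_sub hA] at h
  · set p : unitInterval := ⟨a, ha.1.le, ha.2.le⟩
    set q : unitInterval := ⟨1 - b, by linarith [hb.2], by linarith [hb.1]⟩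
    refine ⟨Ber(true, false, p), Ber(true, false, q), inferInstance, inferInstance,
      bernoulliMeasure_absolutelyContinuous ha.1 ha.2 true false q, {true},
      measurableSet_singleton true, ?_, ?_, ?_⟩
    · simp [p]
    · simp [q]
    · rw [toReal_lintegral_rnDeriv_sq_bernoulliMeasure ha.1 ha.2]
      simp [p, q]

end
end

section
/- Let ρ ∈ (0,1]. If ρ ≥ 1/3, then for all t ∈ ℝ, exp(t²/2) ≥ 1 − ρ + ρ·cosh(t/√ρ); that is, the distribution √(1/ρ)·R(ρ) is 1-subgaussian. Conversely, if ρ < 1/3, then there exists t ∈ ℝ for which exp(t²/2) < 1 − ρ + ρ·cosh(t/√ρ), so the smallest subgaussian constant of √(1/ρ)·R(ρ) exceeds 1. -/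
/-!
With `t = √ρ s` the claim compares `1 - ρ + ρ cosh s` with `exp (ρ s² / 2)`. Termwise, for
`n ≥ 1`, `ρ s²ⁿ / (2n)! ≤ (ρ s² / 2)ⁿ / n!` amounts to `ρⁿ⁻¹ (2n - 1)‼ ≥ 1`, which holds for
`ρ ≥ 1/3` because `(2n - 1)‼ ≥ 3ⁿ⁻¹`. For `ρ < 1/3` the quartic Taylor coefficients decide:
the exponential is `1 + t²/2 + t⁴/8 + O(t⁶)` while the mixture is at least
`1 + t²/2 + t⁴/(24ρ)`, and `t² = 1 - 3ρ` is small enough.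
-/

open Nat Real

theorem Nat.three_pow_le_doubleFactorial_two_mul_add_one (n : ℕ) : 3 ^ n ≤ (2 * n + 1)‼ := by
  induction n with
  | zero => simp
  | succ n ih =>
    rw [show 2 * (n + 1) + 1 = 2 * n + 1 + 2 by ring, doubleFactorial_add_two, pow_succ']
    exact Nat.mul_le_mul (by omega) ih

theorem Nat.factorial_two_mul_succ (n : ℕ) :
    (2 * (n + 1))! = 2 ^ (n + 1) * (n + 1)! * (2 * n + 1)‼ := by
  rw [show 2 * (n + 1) = 2 * n + 1 + 1 by ring, factorial_eq_mul_doubleFactorial,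
    show 2 * n + 1 + 1 = 2 * (n + 1) by ring, doubleFactorial_two_mul]

theorem mul_cosh_series_term_le_exp_series_term {ρ : ℝ} (hρ : 1 / 3 ≤ ρ) (s : ℝ) (n : ℕ) :
    ρ * (s ^ (2 * (n + 1)) / (2 * (n + 1))!) ≤ (ρ * s ^ 2 / 2) ^ (n + 1) / (n + 1)! := by
  have hodd : 1 ≤ ρ ^ n * ((2 * n + 1)‼ : ℝ) := calc
    (1 : ℝ) = (1 / 3) ^ n * 3 ^ n := by rw [← mul_pow]; norm_num
    _ ≤ ρ ^ n * ((2 * n + 1)‼ : ℝ) := by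
      gcongr
      exact_mod_cast three_pow_le_doubleFactorial_two_mul_add_one n
  have hterm : 0 ≤ ρ * ((s ^ 2) ^ (n + 1) / (2 ^ (n + 1) * (n + 1)! * (2 * n + 1)‼)) := by
    have : 0 < ρ := by linarith
    positivity
  calc ρ * (s ^ (2 * (n + 1)) / (2 * (n + 1))!)
      = ρ * ((s ^ 2) ^ (n + 1) / (2 ^ (n + 1) * (n + 1)! * (2 * n + 1)‼)) := by
        rw [factorial_two_mul_succ, pow_mul]; push_cast; rfl
    _ ≤ ρ * ((s ^ 2) ^ (n + 1) / (2 ^ (n + 1) * (n + 1)! * (2 * n + 1)‼)) *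
          (ρ ^ n * (2 * n + 1)‼) := le_mul_of_one_le_right hterm hodd
    _ = (ρ * s ^ 2 / 2) ^ (n + 1) / (n + 1)! := by
        rw [div_pow, mul_pow]
        field_simp
        ring

theorem one_sub_add_mul_cosh_le_exp {ρ : ℝ} (hρ : 1 / 3 ≤ ρ) (s : ℝ) :
    1 - ρ + ρ * cosh s ≤ exp (ρ * s ^ 2 / 2) := by
  have hcosh := (hasSum_nat_add_iff' (f := fun n ↦ ρ * (s ^ (2 * n) / ((2 * n)! : ℝ))) 1).2
    ((Real.hasSum_cosh s).mul_left ρ)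
  have hexp := (hasSum_nat_add_iff' (f := fun n ↦ (ρ * s ^ 2 / 2) ^ n / (n ! : ℝ)) 1).2
    (NormedSpace.expSeries_div_hasSum_exp (ρ * s ^ 2 / 2))
  rw [← Real.exp_eq_exp_ℝ] at hexp
  norm_num [Finset.sum_range_one] at hcosh hexp
  linarith [hasSum_le (mul_cosh_series_term_le_exp_series_term hρ s) hcosh hexp]

theorem one_add_sq_div_two_add_pow_four_div_le_cosh (s : ℝ) :
    1 + s ^ 2 / 2 + s ^ 4 / 24 ≤ cosh s := by
  have h := sum_le_hasSum (Finset.range 3) (fun n _ ↦ by rw [pow_mul]; positivity)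
    (Real.hasSum_cosh s)
  norm_num [Finset.sum_range_succ, factorial] at h
  linarith

theorem exp_le_cubic_of_nonneg_of_le_one {x : ℝ} (h0 : 0 ≤ x) (h1 : x ≤ 1) :
    exp x ≤ 1 + x + x ^ 2 / 2 + 2 * x ^ 3 / 9 := by
  have h := Real.exp_bound' h0 h1 (n := 3) (by norm_num)
  norm_num [Finset.sum_range_succ, factorial] at h
  linarith

theorem exists_exp_lt_one_sub_add_mul_cosh {ρ : ℝ} (hρ0 : 0 < ρ) (hρ : ρ < 1 / 3) :
    ∃ s, exp (ρ * s ^ 2 / 2) < 1 - ρ + ρ * cosh s := by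
  set u := 1 - 3 * ρ
  have hu : 0 < u := by linarith
  refine ⟨√(u / ρ), ?_⟩
  have hs : √(u / ρ) ^ 2 = u / ρ := sq_sqrt (by positivity)
  have hexp : exp (ρ * √(u / ρ) ^ 2 / 2) ≤ 1 + u / 2 + u ^ 2 / 8 + u ^ 3 / 36 := by
    have := exp_le_cubic_of_nonneg_of_le_one (x := u / 2) (by positivity) (by linarith)
    rw [hs, mul_div_cancel₀ _ hρ0.ne']
    linarith
  have hcosh : 1 + u / 2 + u ^ 2 / (24 * ρ) ≤ 1 - ρ + ρ * cosh √(u / ρ) := by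
    have := one_add_sq_div_two_add_pow_four_div_le_cosh √(u / ρ)
    rw [show √(u / ρ) ^ 4 = (√(u / ρ) ^ 2) ^ 2 by ring, hs] at this
    have hρcosh := mul_le_mul_of_nonneg_left this hρ0.le
    have e : ρ * (1 + u / ρ / 2 + (u / ρ) ^ 2 / 24) = ρ + u / 2 + u ^ 2 / (24 * ρ) := by
      field_simp
    linarith
  -- `3ρ = 1 - u` turns the comparison of quartic coefficients `ρ / 8 < 1 / 24` into `ρ u < u`.
  have hquartic : u ^ 2 / 8 + u ^ 3 / 36 < u ^ 2 / (24 * ρ) := by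
    rw [lt_div_iff₀ (by positivity)]
    nlinarith [pow_pos hu 3]
  linarith

theorem sparse_rademacher_subgaussian_general (ρ : ℝ) (hρ0 : 0 < ρ) :
    (1 / 3 ≤ ρ →
      ∀ t : ℝ, 1 - ρ + ρ * Real.cosh (t / Real.sqrt ρ) ≤ Real.exp (t ^ 2 / 2)) ∧
    (ρ < 1 / 3 →
      ∃ t : ℝ, Real.exp (t ^ 2 / 2) < 1 - ρ + ρ * Real.cosh (t / Real.sqrt ρ)) := by
  have hscale (t : ℝ) : ρ * (t / √ρ) ^ 2 / 2 = t ^ 2 / 2 := by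
    rw [div_pow, sq_sqrt hρ0.le]
    field_simp
  refine ⟨fun hρ t ↦ ?_, fun hρ ↦ ?_⟩
  · simpa only [hscale] using one_sub_add_mul_cosh_le_exp hρ (t / √ρ)
  · obtain ⟨s, hs⟩ := exists_exp_lt_one_sub_add_mul_cosh hρ0 hρ
    refine ⟨√ρ * s, ?_⟩
    rwa [mul_div_cancel_left₀ _ (sqrt_ne_zero'.2 hρ0), mul_pow, sq_sqrt hρ0.le]

/-- **Sparse Rademacher subgaussianity (Appendix E).** For `ρ ∈ (0,1]`: if `ρ ≥ 1/3` then
`exp(t²/2) ≥ 1 - ρ + ρ cosh(t/√ρ)` for all `t` (i.e. `√(1/ρ)·R(ρ)` is `1`-subgaussian,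
its MGF being `1 - ρ + ρ cosh(t/√ρ)`); if `ρ < 1/3` there is a `t` where this fails, so
the smallest subgaussian constant exceeds `1`. -/
theorem sparse_rademacher_subgaussian (ρ : ℝ) (hρ0 : 0 < ρ) (hρ1 : ρ ≤ 1) :
    (1 / 3 ≤ ρ →
      ∀ t : ℝ, 1 - ρ + ρ * Real.cosh (t / Real.sqrt ρ) ≤ Real.exp (t ^ 2 / 2)) ∧
    (ρ < 1 / 3 →
      ∃ t : ℝ, Real.exp (t ^ 2 / 2) < 1 - ρ + ρ * Real.cosh (t / Real.sqrt ρ)) :=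
  sparse_rademacher_subgaussian_general ρ hρ0
end
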